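/- If d ∈ D then (2√2/3) · d ∈ D. -/

import Mathlib

/-- `φ(p,q) = (p₁−q₁)² + (p₂−q₂)²` for `p, q ∈ ℂ²`. -/
noncomputable def phi2 (p q : Fin 2 → ℂ) : ℂ := (p 0 - q 0) ^ 2 + (p 1 - q 1) ^ 2

/-- `D` is the set of real `d > 0` such that for all `x, y ∈ ℝ²` with `|x−y| = d` there is a
finite set `S` with `{x,y} ⊆ S ⊆ ℝ²` such that every map `f : S → ℂ²` preserving unit
distance (i.e. `φ(f u, f v) = 1` whenever `u, v ∈ S` and `|u−v| = 1`) satisfies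
`φ(f x, f y) = d²`. -/
noncomputable def D : Set ℝ :=
  {d | 0 < d ∧ ∀ x y : EuclideanSpace ℝ (Fin 2), dist x y = d →
    ∃ S : Set (EuclideanSpace ℝ (Fin 2)), S.Finite ∧ x ∈ S ∧ y ∈ S ∧
      ∀ f : EuclideanSpace ℝ (Fin 2) → (Fin 2 → ℂ),
        (∀ u ∈ S, ∀ v ∈ S, dist u v = 1 → phi2 (f u) (f v) = 1) →
        phi2 (f x) (f y) = (d : ℂ) ^ 2}

/-!
Call a squared length `t` *forced* if every pair of points at squared distance `t` lies in a finite
set on which every unit-distance preserving map into `ℂ²` also gives the pair `φ`-value `t`; thus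
`d ∈ D` iff `d²` is forced. Forced squared lengths are closed under two constructions.

*Kites.* Over `ℂ`, two points with equal `φ`-distances to both ends of a segment with `φ ≠ 0`
either coincide or are mirror images, so the apexes of a kite built on forced sides are mapped to
the same point or to points at the forced diagonal. A second copy of the kite, rotated about one
apex by a forced amount (as in the Moser spindle), rules out the coincidence.

*An equilateral frame.* Once the images of an equilateral triangle are fixed, a point is pinned
down by its `φ`-distances to three non-collinear points already located, so a suitable finite
piece of the triangular lattice is rigid.

From `t = d²` kites give `3t`, `11t/3`, `t/3` and `t/9`, the frame gives `4t/9`, and a last kite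
gives `8t/9 = (2√2/3 · d)²`.
-/
open Filter Module
open scoped RealInnerProductSpace EuclideanSpace

def frameComb {R M : Type*} [Ring R] [AddCommGroup M] [Module R M] (a b c : M) (α β : R) : M :=
  a + α • (b - a) + β • (c - a)

section frameComb

variable {R M : Type*} [Ring R] [AddCommGroup M] [Module R M] (a b c : M)

@[simp] theorem frameComb_zero_zero : frameComb a b c (0 : R) 0 = a := by simp [frameComb]

@[simp] theorem frameComb_one_zero : frameComb a b c (1 : R) 0 = b := by simp [frameComb]

@[simp] theorem frameComb_zero_one : frameComb a b c (0 : R) 1 = c := by simp [frameComb]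

end frameComb

section Real

variable {E : Type*} [NormedAddCommGroup E] [InnerProductSpace ℝ E]

theorem dist_frameComb_sq (a b c : E) (α β α' β' : ℝ) :
    dist (frameComb a b c α β) (frameComb a b c α' β') ^ 2 =
      (α - α') ^ 2 * dist a b ^ 2 + (β - β') ^ 2 * dist a c ^ 2 +
        (α - α') * (β - β') * (dist a b ^ 2 + dist a c ^ 2 - dist b c ^ 2) := by
  have hbc : dist b c ^ 2 = ‖b - a‖ ^ 2 - 2 * ⟪b - a, c - a⟫ + ‖c - a‖ ^ 2 := by
    rw [← norm_sub_sq_real, dist_eq_norm, sub_sub_sub_cancel_right]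
  have hdiff : frameComb a b c α β - frameComb a b c α' β' =
      (α - α') • (b - a) + (β - β') • (c - a) := by
    simp only [frameComb]; module
  rw [hbc, dist_eq_norm, hdiff, norm_add_sq_real, norm_smul, norm_smul, real_inner_smul_left,
    real_inner_smul_right, dist_comm a b, dist_comm a c, dist_eq_norm, dist_eq_norm,
    Real.norm_eq_abs, Real.norm_eq_abs, mul_pow, mul_pow, sq_abs, sq_abs]
  ring

variable [Fact (finrank ℝ E = 2)]

theorem exists_dist_eq_dist_sq_eq_two_mul (x y : E) :
    ∃ z, dist x z = dist x y ∧ dist y z ^ 2 = 2 * dist x y ^ 2 := by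
  have : FiniteDimensional ℝ E := .of_fact_finrank_eq_two
  let J := (finBasisOfFinrankEq ℝ E Fact.out).orientation.rightAngleRotation
  refine ⟨x + J (y - x), ?_, ?_⟩
  · rw [dist_self_add_right, LinearIsometryEquiv.norm_map, dist_comm, dist_eq_norm]
  · rw [dist_eq_norm, sub_add_eq_sub_sub, norm_sub_sq_real, real_inner_comm,
      Orientation.inner_rightAngleRotation_self, LinearIsometryEquiv.norm_map, dist_comm,
      dist_eq_norm]
    ring

theorem exists_dist_sq_eq_of_le (x y : E) {M : ℝ} (hM : 0 ≤ M) (hME : M ≤ 4 * dist x y ^ 2) :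
    ∃ x', dist x' y ^ 2 = dist x y ^ 2 ∧ dist x x' ^ 2 = M := by
  rcases eq_or_ne x y with rfl | hxy
  · exact ⟨x, rfl, by simp at hME ⊢; linarith⟩
  obtain ⟨z, hyz, hxz⟩ := exists_dist_eq_dist_sq_eq_two_mul y x
  set e := dist x y ^ 2
  have he : 0 < e := pow_pos (dist_pos.2 hxy) 2
  have hd (α β α' β' : ℝ) :
      dist (frameComb y x z α β) (frameComb y x z α' β') ^ 2 =
        e * ((α - α') ^ 2 + (β - β') ^ 2) := by
    rw [dist_frameComb_sq, hyz, hxz, dist_comm y x]; ring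
  -- rotate `x` about `y` by the angle whose cosine is `C`
  set C := 1 - M / (2 * e) with hC
  have hCe : 2 * e * C = 2 * e - M := by rw [hC]; field_simp
  have hC1 : C ^ 2 ≤ 1 := by
    have : -1 ≤ C := by nlinarith
    have : C ≤ 1 := by nlinarith
    nlinarith
  refine ⟨frameComb y x z C √(1 - C ^ 2), ?_, ?_⟩
  · have := hd C √(1 - C ^ 2) 0 0
    rw [frameComb_zero_zero] at this
    rw [this, sub_zero, sub_zero, Real.sq_sqrt (by linarith)]; ring
  · have := hd 1 0 C √(1 - C ^ 2)
    rw [frameComb_one_zero] at this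
    rw [this, zero_sub, neg_sq, Real.sq_sqrt (by linarith)]; linear_combination -hCe

theorem exists_kite {x y : E} {Q R S : ℝ} (hQ : 0 < Q) (hxy : x ≠ y)
    (h : dist x y ^ 2 * Q = 4 * R * Q - (Q + R - S) ^ 2) :
    ∃ a b, dist a b ^ 2 = Q ∧ dist x a ^ 2 = R ∧ dist y a ^ 2 = R ∧
      dist x b ^ 2 = S ∧ dist y b ^ 2 = S := by
  obtain ⟨z, hyz, hxz⟩ := exists_dist_eq_dist_sq_eq_two_mul y x
  set e := dist x y ^ 2
  have he : 0 < e := pow_pos (dist_pos.2 hxy) 2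
  have hd (α β α' β' : ℝ) :
      dist (frameComb y x z α β) (frameComb y x z α' β') ^ 2 =
        e * ((α - α') ^ 2 + (β - β') ^ 2) := by
    rw [dist_frameComb_sq, hyz, hxz, dist_comm y x]; ring
  set k := √(Q / e)
  have hk : e * k ^ 2 = Q := by rw [Real.sq_sqrt (by positivity)]; field_simp
  have hk0 : 0 < k := Real.sqrt_pos.2 (by positivity)
  set σ := (Q + R - S) / (2 * e * k)
  have hσ : 2 * e * k * σ = Q + R - S := by simp only [σ]; field_simp
  have hσa : 4 * Q * (e * σ ^ 2) = (Q + R - S) ^ 2 := by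
    linear_combination (2 * e * k * σ + (Q + R - S)) * hσ - 4 * e * σ ^ 2 * hk
  have hRa : e * σ ^ 2 = R - e / 4 :=
    mul_left_cancel₀ (by positivity : 4 * Q ≠ 0) (by linear_combination hσa + h)
  have hSb : e * (σ - k) ^ 2 = S - e / 4 := by linear_combination hRa - hσ + hk
  have hx := hd 1 0
  have hy := hd 0 0
  rw [frameComb_one_zero] at hx
  rw [frameComb_zero_zero] at hy
  refine ⟨frameComb y x z (1 / 2) σ, frameComb y x z (1 / 2) (σ - k), ?_, ?_, ?_, ?_, ?_⟩
  · rw [hd]; linear_combination hk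
  · rw [hx]; linear_combination hRa
  · rw [hy]; linear_combination hRa
  · rw [hx]; linear_combination hSb
  · rw [hy]; linear_combination hSb

theorem exists_equilateral_frame {x y : E} {t : ℝ} (h : dist x y ^ 2 = 4 * t / 9) :
    ∃ a b c : E, dist a b ^ 2 = t ∧ dist a c ^ 2 = t ∧ dist b c ^ 2 = t ∧
      frameComb a b c (-1 / 3 : ℝ) (2 / 3) = x ∧ frameComb a b c (1 / 3 : ℝ) 0 = y := by
  obtain ⟨z, hxz, hyz⟩ := exists_dist_eq_dist_sq_eq_two_mul x y
  have hd (α β α' β' : ℝ) : dist (frameComb x y z α β) (frameComb x y z α' β') ^ 2 =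
      4 * t / 9 * ((α - α') ^ 2 + (β - β') ^ 2) := by
    rw [dist_frameComb_sq, hxz, hyz, h]; ring
  have h3 : √3 ^ 2 = 3 := Real.sq_sqrt (by norm_num)
  refine ⟨frameComb x y z (3 / 4) (-√3 / 4), frameComb x y z (3 / 2) (√3 / 2),
    frameComb x y z 0 (√3 / 2), ?_, ?_, ?_, ?_, ?_⟩
  · rw [hd]; linear_combination t / 4 * h3
  · rw [hd]; linear_combination t / 4 * h3
  · rw [hd]; ring
  · simp only [frameComb]; module
  · simp only [frameComb]; module

end Real

theorem phi2_comm (p q : Fin 2 → ℂ) : phi2 p q = phi2 q p := by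
  unfold phi2; ring

@[simp] theorem phi2_self (p : Fin 2 → ℂ) : phi2 p p = 0 := by
  simp [phi2]

theorem phi2_frameComb (a b c : Fin 2 → ℂ) (α β α' β' : ℂ) :
    phi2 (frameComb a b c α β) (frameComb a b c α' β') =
      (α - α') ^ 2 * phi2 a b + (β - β') ^ 2 * phi2 a c +
        (α - α') * (β - β') * (phi2 a b + phi2 a c - phi2 b c) := by
  simp only [phi2, frameComb, Pi.add_apply, Pi.sub_apply, Pi.smul_apply, smul_eq_mul]
  ring

theorem eq_of_phi2_eq {a b c z w : Fin 2 → ℂ}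
    (habc : (b 0 - a 0) * (c 1 - a 1) ≠ (b 1 - a 1) * (c 0 - a 0))
    (ha : phi2 z a = phi2 w a) (hb : phi2 z b = phi2 w b) (hc : phi2 z c = phi2 w c) :
    z = w := by
  simp only [phi2] at ha hb hc
  have hab : (z 0 - w 0) * (b 0 - a 0) + (z 1 - w 1) * (b 1 - a 1) = 0 := by
    linear_combination (ha - hb) / 2
  have hac : (z 0 - w 0) * (c 0 - a 0) + (z 1 - w 1) * (c 1 - a 1) = 0 := by
    linear_combination (ha - hc) / 2
  have hdet := sub_ne_zero.2 habc
  have h0 : z 0 = w 0 := sub_eq_zero.1 <| (mul_eq_zero.1 <| by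
    linear_combination (c 1 - a 1) * hab - (b 1 - a 1) * hac).resolve_right hdet
  have h1 : z 1 = w 1 := sub_eq_zero.1 <| (mul_eq_zero.1 <| by
    linear_combination (b 0 - a 0) * hac - (c 0 - a 0) * hab).resolve_right hdet
  funext i
  fin_cases i
  exacts [h0, h1]

theorem frameComb_eq_of_phi2_eq {a b c z : Fin 2 → ℂ}
    (habc : (phi2 a b + phi2 a c - phi2 b c) ^ 2 ≠ 4 * phi2 a b * phi2 a c)
    {α β : ℂ} (α₁ β₁ α₂ β₂ α₃ β₃ : ℂ) (hdet : (α₂ - α₁) * (β₃ - β₁) ≠ (β₂ - β₁) * (α₃ - α₁))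
    (h₁ : phi2 z (frameComb a b c α₁ β₁) =
      phi2 (frameComb a b c α β) (frameComb a b c α₁ β₁))
    (h₂ : phi2 z (frameComb a b c α₂ β₂) =
      phi2 (frameComb a b c α β) (frameComb a b c α₂ β₂))
    (h₃ : phi2 z (frameComb a b c α₃ β₃) =
      phi2 (frameComb a b c α β) (frameComb a b c α₃ β₃)) :
    z = frameComb a b c α β := by
  refine eq_of_phi2_eq ?_ h₁ h₂ h₃
  set D := (b 0 - a 0) * (c 1 - a 1) - (b 1 - a 1) * (c 0 - a 0)
  have hD : D ≠ 0 := by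
    intro hD
    apply habc
    simp only [phi2]
    linear_combination -4 * D * hD
  rw [← sub_ne_zero]
  convert mul_ne_zero (sub_ne_zero.2 hdet) hD using 1
  simp only [D, frameComb, Pi.add_apply, Pi.sub_apply, Pi.smul_apply, smul_eq_mul]
  ring

theorem eq_or_phi2_eq_of_kite {a b x y : Fin 2 → ℂ} {Q R S : ℂ} (hQ : Q ≠ 0)
    (hab : phi2 a b = Q) (hxa : phi2 x a = R) (hya : phi2 y a = R)
    (hxb : phi2 x b = S) (hyb : phi2 y b = S) :
    x = y ∨ Q * phi2 x y = 4 * R * Q - (Q + R - S) ^ 2 := by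
  obtain ⟨u, rfl⟩ : ∃ u, b = a + u := ⟨b - a, by abel⟩
  obtain ⟨p, rfl⟩ : ∃ p, x = a + p := ⟨x - a, by abel⟩
  obtain ⟨q, rfl⟩ : ∃ q, y = a + q := ⟨y - a, by abel⟩
  simp only [phi2, Pi.add_apply, add_sub_add_left_eq_sub, add_sub_cancel_left, sub_add_cancel_left,
    neg_sq] at hab hxa hya hxb hyb ⊢
  rw [add_right_inj]
  have hpu : 2 * (p 0 * u 0 + p 1 * u 1) = R + Q - S := by linear_combination hxa + hab - hxb
  have hqu : 2 * (q 0 * u 0 + q 1 * u 1) = R + Q - S := by linear_combination hya + hab - hyb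
  have hdu : (p 0 - q 0) * u 0 + (p 1 - q 1) * u 1 = 0 := by linear_combination (hpu - hqu) / 2
  have hp : (p 0 * u 0 + p 1 * u 1) ^ 2 + (p 0 * u 1 - p 1 * u 0) ^ 2 = R * Q := by
    linear_combination (u 0 ^ 2 + u 1 ^ 2) * hxa + R * hab
  have hq : (q 0 * u 0 + q 1 * u 1) ^ 2 + (q 0 * u 1 - q 1 * u 0) ^ 2 = R * Q := by
    linear_combination (u 0 ^ 2 + u 1 ^ 2) * hya + R * hab
  -- `p` and `q` have the same dot product with `u`, so their cross products with `u` agree up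
  -- to sign
  have hcross : ((p 0 * u 1 - p 1 * u 0) - (q 0 * u 1 - q 1 * u 0)) *
      ((p 0 * u 1 - p 1 * u 0) + (q 0 * u 1 - q 1 * u 0)) = 0 := by
    linear_combination hp - hq + (p 0 * u 0 + p 1 * u 1 + (q 0 * u 0 + q 1 * u 1)) * (hqu - hpu) / 2
  rcases mul_eq_zero.1 hcross with hdiff | hsum
  · left
    have h0 : p 0 = q 0 := sub_eq_zero.1 <| (mul_eq_zero.1 (by
      linear_combination -(p 0 - q 0) * hab + u 0 * hdu + u 1 * hdiff :
        (p 0 - q 0) * Q = 0)).resolve_right hQ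
    have h1 : p 1 = q 1 := sub_eq_zero.1 <| (mul_eq_zero.1 (by
      linear_combination -(p 1 - q 1) * hab + u 1 * hdu - u 0 * hdiff :
        (p 1 - q 1) * Q = 0)).resolve_right hQ
    funext i
    fin_cases i
    exacts [h0, h1]
  · right
    linear_combination -((p 0 - q 0) ^ 2 + (p 1 - q 1) ^ 2) * hab
      + ((p 0 - q 0) * u 0 + (p 1 - q 1) * u 1) * hdu
      + ((q 0 * u 1 - q 1 * u 0) - 3 * (p 0 * u 1 - p 1 * u 0)) * hsum + 4 * hp
      - (Q + R - S + 2 * (p 0 * u 0 + p 1 * u 1)) * hpu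

theorem phi2_eq_of_frame {a b c c' g x g' y : Fin 2 → ℂ} {T : ℂ} (hT : T ≠ 0)
    (hab : phi2 a b = T) (hac : phi2 a c = T) (hbc : phi2 b c = T)
    (hc'a : phi2 c' a = T) (hc'b : phi2 c' b = T) (hc'c : phi2 c' c = 3 * T)
    (hga : phi2 g a = T / 3) (hgb : phi2 g b = T / 3) (hgc : phi2 g c = T / 3)
    (hxc : phi2 x c = T / 3) (hxa : phi2 x a = T / 3) (hxg : phi2 x g = T / 3)
    (hg'c' : phi2 g' c' = T / 3) (hg'a : phi2 g' a = T / 3) (hg'x : phi2 g' x = T)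
    (hyg' : phi2 y g' = T / 9) (hyg : phi2 y g = T / 9) (hya : phi2 y a = T / 9) :
    phi2 x y = 4 * T / 9 := by
  have hW (α β α' β' : ℂ) : phi2 (frameComb a b c α β) (frameComb a b c α' β') =
      T * ((α - α') ^ 2 + (β - β') ^ 2 + (α - α') * (β - β')) := by
    rw [phi2_frameComb, hab, hac, hbc]; ring
  have habc : (phi2 a b + phi2 a c - phi2 b c) ^ 2 ≠ 4 * phi2 a b * phi2 a c := by
    rw [hab, hac, hbc]
    intro h
    exact pow_ne_zero 2 hT (by linear_combination -h / 3)
  have hc' : c' = frameComb a b c (1 : ℂ) (-1) := by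
    refine frameComb_eq_of_phi2_eq habc 0 0 1 0 0 1 (by norm_num) ?_ ?_ ?_ <;> rw [hW] <;>
      simp only [frameComb_zero_zero, frameComb_one_zero, frameComb_zero_one, hc'a, hc'b, hc'c] <;>
      ring
  have hg : g = frameComb a b c (1 / 3 : ℂ) (1 / 3) := by
    refine frameComb_eq_of_phi2_eq habc 0 0 1 0 0 1 (by norm_num) ?_ ?_ ?_ <;> rw [hW] <;>
      simp only [frameComb_zero_zero, frameComb_one_zero, frameComb_zero_one, hga, hgb, hgc] <;>
      ring
  have hx : x = frameComb a b c (-1 / 3 : ℂ) (2 / 3) := by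
    refine frameComb_eq_of_phi2_eq habc 0 1 0 0 (1 / 3) (1 / 3) (by norm_num) ?_ ?_ ?_ <;>
      rw [hW] <;> simp only [frameComb_zero_zero, frameComb_zero_one, ← hg, hxc, hxa, hxg] <;> ring
  have hg' : g' = frameComb a b c (2 / 3 : ℂ) (-1 / 3) := by
    refine frameComb_eq_of_phi2_eq habc 1 (-1) 0 0 (-1 / 3) (2 / 3) (by norm_num) ?_ ?_ ?_ <;>
      rw [hW] <;> simp only [frameComb_zero_zero, ← hc', ← hx, hg'c', hg'a, hg'x] <;> ring
  have hy : y = frameComb a b c (1 / 3 : ℂ) 0 := by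
    refine frameComb_eq_of_phi2_eq habc (2 / 3) (-1 / 3) (1 / 3) (1 / 3) 0 0 (by norm_num)
      ?_ ?_ ?_ <;> rw [hW] <;> simp only [frameComb_zero_zero, ← hg', ← hg, hyg', hyg, hya] <;> ring
  rw [hx, hy, hW]
  ring

def UnitDistPreserving (S : Set (EuclideanSpace ℝ (Fin 2)))
    (f : EuclideanSpace ℝ (Fin 2) → Fin 2 → ℂ) : Prop :=
  ∀ u ∈ S, ∀ v ∈ S, dist u v = 1 → phi2 (f u) (f v) = 1

theorem UnitDistPreserving.mono {S T : Set (EuclideanSpace ℝ (Fin 2))}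
    {f : EuclideanSpace ℝ (Fin 2) → Fin 2 → ℂ} (hST : S ⊆ T) (hf : UnitDistPreserving T f) :
    UnitDistPreserving S f :=
  fun u hu v hv ↦ hf u (hST hu) v (hST hv)

/-- `∀ᶠ f in unitDistFilter, P f` says that some finite set forces `P f` for every `f` preserving
unit distances on it. -/
def unitDistFilter : Filter (EuclideanSpace ℝ (Fin 2) → Fin 2 → ℂ) :=
  ⨅ S : Finset (EuclideanSpace ℝ (Fin 2)), 𝓟 {f | UnitDistPreserving S f}

theorem hasBasis_unitDistFilter :
    unitDistFilter.HasBasis (fun _ ↦ True) fun S : Finset (EuclideanSpace ℝ (Fin 2)) ↦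
      {f | UnitDistPreserving S f} :=
  hasBasis_iInf_principal <| directed_of_isDirected_le fun _ _ hST _ hf ↦
    hf.mono (Finset.coe_subset.2 hST)

def IsForcedSqDist (t : ℝ) : Prop :=
  ∀ x y : EuclideanSpace ℝ (Fin 2), dist x y ^ 2 = t →
    ∀ᶠ f in unitDistFilter, phi2 (f x) (f y) = t

theorem mem_D_iff {d : ℝ} : d ∈ D ↔ 0 < d ∧ IsForcedSqDist (d ^ 2) := by
  refine ⟨fun ⟨hd, h⟩ ↦ ⟨hd, fun x y hxy ↦ ?_⟩, fun ⟨hd, h⟩ ↦ ⟨hd, fun x y hxy ↦ ?_⟩⟩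
  · obtain ⟨S, hS, -, -, hf⟩ := h x y ((pow_left_inj₀ dist_nonneg hd.le two_ne_zero).1 hxy)
    refine hasBasis_unitDistFilter.eventually_iff.2 ⟨hS.toFinset, trivial, fun f hf' ↦ ?_⟩
    push_cast
    exact hf f (by simpa using hf' : UnitDistPreserving S f)
  · obtain ⟨S, -, hS⟩ := hasBasis_unitDistFilter.eventually_iff.1 (h x y (by rw [hxy]))
    refine ⟨↑(insert x (insert y S)), Finset.finite_toSet _, by simp, by simp, fun f hf ↦ ?_⟩
    exact_mod_cast hS (UnitDistPreserving.mono (Finset.coe_subset.2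
      ((Finset.subset_insert _ _).trans (Finset.subset_insert _ _))) hf)

namespace IsForcedSqDist

theorem of_kite {Q R S M E : ℝ} (hQ : IsForcedSqDist Q) (hR : IsForcedSqDist R)
    (hS : IsForcedSqDist S) (hM : IsForcedSqDist M) (hQ0 : 0 < Q) (hM0 : 0 < M)
    (hME : M ≤ 4 * E) (hME' : M ≠ E) (hkite : E * Q = 4 * R * Q - (Q + R - S) ^ 2) :
    IsForcedSqDist E := by
  rintro x y rfl
  have hxy : x ≠ y := by rintro rfl; simp at hME; linarith
  obtain ⟨x', hx'y, hxx'⟩ := exists_dist_sq_eq_of_le x y hM0.le hME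
  have hx'y' : x' ≠ y := by rintro rfl; exact hME' hxx'.symm
  obtain ⟨a, b, hab, hxa, hya, hxb, hyb⟩ := exists_kite hQ0 hxy hkite
  obtain ⟨a', b', ha'b', hx'a', hya', hx'b', hyb'⟩ := exists_kite hQ0 hx'y' (hx'y ▸ hkite)
  filter_upwards [hQ a b hab, hR x a hxa, hR y a hya, hS x b hxb, hS y b hyb, hQ a' b' ha'b',
    hR x' a' hx'a', hR y a' hya', hS x' b' hx'b', hS y b' hyb', hM x x' hxx']
    with f e₁ e₂ e₃ e₄ e₅ e₆ e₇ e₈ e₉ e₁₀ e₁₁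
  have hQ' : (Q : ℂ) ≠ 0 := by exact_mod_cast hQ0.ne'
  have hkite' : ((dist x y ^ 2 : ℝ) : ℂ) * Q = 4 * R * Q - (Q + R - S) ^ 2 := by
    exact_mod_cast hkite
  rcases eq_or_phi2_eq_of_kite hQ' e₁ e₂ e₃ e₄ e₅ with hfxy | hfxy
  · -- `f x = f y`: the rotated kite then forces `M = 0` or `M = E`
    rcases eq_or_phi2_eq_of_kite hQ' e₆ e₇ e₈ e₉ e₁₀ with hfx'y | hfx'y
    · rw [hfxy, ← hfx'y, phi2_self] at e₁₁
      exact absurd (by exact_mod_cast e₁₁.symm) hM0.ne'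
    · refine absurd (mul_left_cancel₀ hQ' ?_ : (M : ℂ) = (dist x y ^ 2 : ℝ))
        (by exact_mod_cast hME')
      rw [← e₁₁, hfxy, phi2_comm, hfx'y, ← hkite']
      ring
  · exact mul_left_cancel₀ hQ' (hfxy.trans (by rw [← hkite']; ring))

theorem four_mul_div_nine {t : ℝ} (ht : 0 < t) (h1 : IsForcedSqDist t)
    (h3 : IsForcedSqDist (3 * t)) (h13 : IsForcedSqDist (t / 3)) (h19 : IsForcedSqDist (t / 9)) :
    IsForcedSqDist (4 * t / 9) := by
  intro x y hxy
  obtain ⟨a, b, c, hab, hac, hbc, rfl, rfl⟩ := exists_equilateral_frame hxy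
  have edge {L : ℝ} (α β α' β' : ℝ) (hL : IsForcedSqDist L)
      (h : t * ((α - α') ^ 2 + (β - β') ^ 2 + (α - α') * (β - β')) = L) :
      ∀ᶠ f in unitDistFilter, phi2 (f (frameComb a b c α β)) (f (frameComb a b c α' β')) = L :=
    hL _ _ (by rw [dist_frameComb_sq, hab, hac, hbc, ← h]; ring)
  filter_upwards [edge 0 0 1 0 h1 (by ring), edge 0 0 0 1 h1 (by ring), edge 1 0 0 1 h1 (by ring),
    edge 1 (-1) 0 0 h1 (by ring), edge 1 (-1) 1 0 h1 (by ring), edge 1 (-1) 0 1 h3 (by ring),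
    edge (1 / 3) (1 / 3) 0 0 h13 (by ring), edge (1 / 3) (1 / 3) 1 0 h13 (by ring),
    edge (1 / 3) (1 / 3) 0 1 h13 (by ring), edge (-1 / 3) (2 / 3) 0 1 h13 (by ring),
    edge (-1 / 3) (2 / 3) 0 0 h13 (by ring), edge (-1 / 3) (2 / 3) (1 / 3) (1 / 3) h13 (by ring),
    edge (2 / 3) (-1 / 3) 1 (-1) h13 (by ring), edge (2 / 3) (-1 / 3) 0 0 h13 (by ring),
    edge (2 / 3) (-1 / 3) (-1 / 3) (2 / 3) h1 (by ring),
    edge (1 / 3) 0 (2 / 3) (-1 / 3) h19 (by ring),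
    edge (1 / 3) 0 (1 / 3) (1 / 3) h19 (by ring), edge (1 / 3) 0 0 0 h19 (by ring)]
    with f e₁ e₂ e₃ e₄ e₅ e₆ e₇ e₈ e₉ e₁₀ e₁₁ e₁₂ e₁₃ e₁₄ e₁₅ e₁₆ e₁₇ e₁₈
  push_cast at e₁ e₂ e₃ e₄ e₅ e₆ e₇ e₈ e₉ e₁₀ e₁₁ e₁₂ e₁₃ e₁₄ e₁₅ e₁₆ e₁₇ e₁₈ ⊢
  exact phi2_eq_of_frame (by exact_mod_cast ht.ne') e₁ e₂ e₃ e₄ e₅ e₆ e₇ e₈ e₉ e₁₀ e₁₁ e₁₂ e₁₃ e₁₄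
    e₁₅ e₁₆ e₁₇ e₁₈

theorem three_mul {t : ℝ} (ht : 0 < t) (h : IsForcedSqDist t) : IsForcedSqDist (3 * t) :=
  h.of_kite h h h ht ht (by linarith) (by intro; linarith) (by ring)

theorem div_three {t : ℝ} (ht : 0 < t) (h : IsForcedSqDist t) : IsForcedSqDist (t / 3) := by
  have h3 := h.three_mul ht
  have h113 : IsForcedSqDist (11 * t / 3) :=
    h3.of_kite h3 h h (by positivity) ht (by linarith) (by intro; linarith) (by ring)
  exact h113.of_kite h h h (by positivity) ht (by linarith) (by intro; linarith) (by ring)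

theorem eight_mul_div_nine {t : ℝ} (ht : 0 < t) (h : IsForcedSqDist t) :
    IsForcedSqDist (8 * t / 9) := by
  have h13 := h.div_three ht
  have h19 : IsForcedSqDist (t / 9) := by
    convert h13.div_three (by positivity) using 1; ring
  have h49 := four_mul_div_nine ht h (h.three_mul ht) h13 h19
  exact h49.of_kite h13 h13 h (by positivity) ht (by linarith) (by intro; linarith) (by ring)

end IsForcedSqDist

theorem two_sqrt_two_div_three_mul_mem_D {d : ℝ} (hd : d ∈ D) :
    2 * Real.sqrt 2 / 3 * d ∈ D := by
  obtain ⟨hd0, hforced⟩ := mem_D_iff.1 hd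
  have hsq : (2 * Real.sqrt 2 / 3 * d) ^ 2 = 8 * d ^ 2 / 9 := by
    rw [mul_pow, div_pow, mul_pow, Real.sq_sqrt zero_le_two]; ring
  exact mem_D_iff.2 ⟨by positivity, hsq ▸ hforced.eight_mul_div_nine (by positivity)⟩
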